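/- arXiv:2505.21804 — 2 statements merged into one kernel-verified Lean document; each statement's English description precedes it below -/
import Mathlib

section
/- For α>0, β>0, γ>0, x∈ℝ and s>|x|^{1/α}, the Laplace transform of t ↦ t^{β-1} E_{α,β}^{γ}(x t^{α}) equals s^{αγ-β}/(s^{α}-x)^{γ}, where E_{α,β}^{γ}(z) = (1/Γ(γ)) ∑_{j≥0} z^{j} Γ(j+γ)/(j! Γ(αj+β)) is the three-parameter Mittag-Leffler function. -/
open Real MeasureTheory Set Filter

/-- Three-parameter Mittag-Leffler function. -/
noncomputable def mittagLeffler3 (a b g x : ℝ) : ℝ :=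
  (1 / Real.Gamma g) * ∑' j : ℕ, x ^ j * Real.Gamma (j + g) / (j.factorial * Real.Gamma (a * j + b))

private lemma mlAux_tendsto (g : ℝ) :
    Tendsto (fun n : ℕ => ((n : ℝ) + g) / ((n : ℝ) + 1)) atTop (nhds 1) := by
  have h : Tendsto (fun n : ℕ => 1 + (g - 1) / ((n : ℝ) + 1)) atTop (nhds (1 + 0)) :=
    tendsto_const_nhds.add (Tendsto.div_atTop tendsto_const_nhds
      (tendsto_atTop_add_const_right _ 1 tendsto_natCast_atTop_atTop))
  rw [add_zero] at h
  refine h.congr fun n => ?_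
  have hn : ((n : ℝ) + 1) ≠ 0 := by positivity
  field_simp
  ring

private lemma ml_summable (g : ℝ) (hg : 0 < g) {r : ℝ} (hr0 : 0 ≤ r) (hr : r < 1) :
    Summable fun j : ℕ => Real.Gamma (j + g) / j.factorial * r ^ j := by
  rcases eq_or_lt_of_le hr0 with h0 | h0
  · apply summable_of_ne_finset_zero (s := {0})
    intro j hj
    simp only [Finset.mem_singleton] at hj
    simp [← h0, zero_pow hj]
  · set f : ℕ → ℝ := fun j => Real.Gamma (j + g) / j.factorial * r ^ j with hf
    have hjg : ∀ j : ℕ, (0:ℝ) < (j:ℝ) + g := fun j =>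
      add_pos_of_nonneg_of_pos (Nat.cast_nonneg j) hg
    have hpos : ∀ j, 0 < f j := by
      intro j
      have h1 := Real.Gamma_pos_of_pos (hjg j)
      have h2 : (0:ℝ) < j.factorial := by exact_mod_cast j.factorial_pos
      exact mul_pos (div_pos h1 h2) (pow_pos h0 j)
    have hstep : ∀ n : ℕ, f (n + 1) = (((n:ℝ) + g) / ((n:ℝ) + 1) * r) * f n := by
      intro n
      have hng : (n:ℝ) + g ≠ 0 := (hjg n).ne'
      have h1 : ((n + 1 : ℕ) : ℝ) + g = ((n:ℝ) + g) + 1 := by push_cast; ring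
      have h2 : (((n+1).factorial : ℕ) : ℝ) = ((n:ℝ) + 1) * n.factorial := by
        rw [Nat.factorial_succ]; push_cast; ring
      simp only [hf, h1, Real.Gamma_add_one hng, h2, pow_succ]
      have hn1 : ((n:ℝ) + 1) ≠ 0 := by positivity
      have hfa : ((n.factorial : ℕ) : ℝ) ≠ 0 := Nat.cast_ne_zero.mpr n.factorial_ne_zero
      field_simp
    refine summable_of_ratio_test_tendsto_lt_one hr (Eventually.of_forall fun n => (hpos n).ne') ?_
    have h := (mlAux_tendsto g).mul (tendsto_const_nhds (x := r))
    rw [one_mul] at h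
    refine h.congr fun n => ?_
    have hc : (0:ℝ) < ((n:ℝ) + g) / ((n:ℝ) + 1) * r :=
      mul_pos (div_pos (hjg n) (by positivity)) h0
    rw [hstep n, Real.norm_eq_abs, Real.norm_eq_abs, abs_mul, abs_of_pos (hpos n),
      mul_div_assoc, div_self (hpos n).ne', mul_one, abs_of_pos hc]

private lemma ml_binomial (g : ℝ) (hg : 0 < g) {y : ℝ} (hy : |y| < 1) :
    ∑' j : ℕ, Real.Gamma (j + g) / j.factorial * y ^ j = Real.Gamma g * (1 - y) ^ (-g) := by
  have hy' := abs_lt.mp hy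
  have hy1 : 0 < 1 - y := by linarith [hy'.2]
  have hjg : ∀ j : ℕ, (0:ℝ) < (j:ℝ) + g := fun j =>
    add_pos_of_nonneg_of_pos (Nat.cast_nonneg j) hg
  set F : ℕ → ℝ → ℝ := fun j t =>
    (y ^ j / j.factorial) * (Real.exp (-t) * t ^ ((j : ℝ) + g - 1)) with hF
  have hint : ∀ j : ℕ, Integrable (F j) (volume.restrict (Ioi 0)) := fun j =>
    (Real.GammaIntegral_convergent (hjg j)).const_mul _
  have hnorm : ∀ j : ℕ, (∫ t in Ioi (0:ℝ), ‖F j t‖)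
      = Real.Gamma ((j:ℝ) + g) / j.factorial * |y| ^ j := by
    intro j
    have hptn : ∀ t ∈ Ioi (0:ℝ), ‖F j t‖
        = (|y| ^ j / j.factorial) * (Real.exp (-t) * t ^ ((j:ℝ) + g - 1)) := by
      intro t ht
      have ht0 : (0:ℝ) < t := ht
      simp only [hF]; rw [Real.norm_eq_abs, abs_mul, abs_mul, abs_div, abs_pow, abs_of_pos (Real.exp_pos _),
        abs_of_pos (Real.rpow_pos_of_pos ht0 _), Nat.abs_cast]
    rw [setIntegral_congr_fun measurableSet_Ioi hptn, integral_const_mul,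
      ← Real.Gamma_eq_integral (hjg j)]
    ring
  have hsum : Summable fun j : ℕ => ∫ t in Ioi (0:ℝ), ‖F j t‖ := by
    refine ((ml_summable g hg (abs_nonneg y) hy).congr ?_)
    intro j; rw [hnorm j]
  have hswap := MeasureTheory.integral_tsum_of_summable_integral_norm hint hsum
  have hL : (∑' j : ℕ, ∫ t in Ioi (0:ℝ), F j t)
      = ∑' j : ℕ, Real.Gamma (j + g) / j.factorial * y ^ j := by
    refine tsum_congr fun j => ?_
    simp only [hF]
    rw [integral_const_mul, ← Real.Gamma_eq_integral (hjg j)]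
    ring
  have hpt : ∀ t ∈ Ioi (0:ℝ), (∑' j : ℕ, F j t) = t ^ (g - 1) * Real.exp (-((1 - y) * t)) := by
    intro t ht
    have ht0 : (0:ℝ) < t := ht
    have h1 : ∀ j : ℕ, F j t
        = (Real.exp (-t) * t ^ (g - 1)) * (((j.factorial : ℝ))⁻¹ • (y * t) ^ j) := by
      intro j
      have h2 : t ^ ((j:ℝ) + g - 1) = t ^ (j:ℕ) * t ^ (g - 1) := by
        rw [show (j:ℝ) + g - 1 = (j:ℝ) + (g - 1) by ring, Real.rpow_add ht0,
          Real.rpow_natCast]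
      simp only [hF]; rw [h2, smul_eq_mul, mul_pow]
      ring
    simp only [h1]
    have hexp : Real.exp (y * t) = ∑' n : ℕ, ((n.factorial : ℝ))⁻¹ • (y * t) ^ n := by
      rw [Real.exp_eq_exp_ℝ, NormedSpace.exp_eq_tsum (𝕂 := ℝ)]
    rw [tsum_mul_left, ← hexp, mul_comm (Real.exp (-t)) (t ^ (g - 1)), mul_assoc, ← Real.exp_add, show -t + y * t = -((1 - y) * t) by ring]
  rw [setIntegral_congr_fun measurableSet_Ioi hpt, integral_rpow_mul_exp_neg_mul_Ioi hg hy1]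
    at hswap
  rw [← hL, hswap, one_div, Real.inv_rpow hy1.le, ← Real.rpow_neg hy1.le]
  ring

theorem laplace_mittagLeffler3 (a b g x : ℝ) (ha : 0 < a) (hb : 0 < b) (hg : 0 < g)
    (s : ℝ) (hs : s > |x| ^ (1 / a)) :
    ∫ t in Ioi (0 : ℝ), Real.exp (-s * t) * (t ^ (b - 1) * mittagLeffler3 a b g (x * t ^ a)) =
      s ^ (a * g - b) / (s ^ a - x) ^ g := by
  have hs0 : 0 < s := lt_of_le_of_lt (Real.rpow_nonneg (abs_nonneg x) _) hs
  have hsa : 0 < s ^ a := Real.rpow_pos_of_pos hs0 a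
  have hxs : |x| < s ^ a := by
    have h1 : (|x| ^ (1 / a)) ^ a < s ^ a :=
      Real.rpow_lt_rpow (Real.rpow_nonneg (abs_nonneg x) _) hs ha
    rwa [← Real.rpow_mul (abs_nonneg x), one_div, inv_mul_cancel₀ ha.ne', Real.rpow_one] at h1
  have hGg : 0 < Real.Gamma g := Real.Gamma_pos_of_pos hg
  have hp : ∀ j : ℕ, (0:ℝ) < a * j + b := fun j =>
    add_pos_of_nonneg_of_pos (mul_nonneg ha.le (Nat.cast_nonneg j)) hb
  have hjg : ∀ j : ℕ, (0:ℝ) < (j:ℝ) + g := fun j =>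
    add_pos_of_nonneg_of_pos (Nat.cast_nonneg j) hg
  have hGp : ∀ j : ℕ, 0 < Real.Gamma (a * j + b) := fun j => Real.Gamma_pos_of_pos (hp j)
  set F : ℕ → ℝ → ℝ := fun j t =>
    (x ^ j * Real.Gamma (j + g) / (j.factorial * Real.Gamma (a * j + b)) / Real.Gamma g) *
      (t ^ (a * j + b - 1) * Real.exp (-(s * t))) with hF
  -- integrability of the base functions
  have hbase : ∀ j : ℕ, IntegrableOn (fun t : ℝ => t ^ (a * j + b - 1) * Real.exp (-(s * t)))
      (Ioi 0) := by
    intro j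
    have := integrableOn_rpow_mul_exp_neg_mul_rpow (p := 1) (s := a * j + b - 1) (b := s)
      (by linarith [hp j]) one_pos hs0
    simpa [Real.rpow_one] using this
  have hval : ∀ j : ℕ, (∫ t in Ioi (0:ℝ), t ^ (a * j + b - 1) * Real.exp (-(s * t)))
      = (1 / s) ^ (a * j + b) * Real.Gamma (a * j + b) :=
    fun j => integral_rpow_mul_exp_neg_mul_Ioi (hp j) hs0
  have hint : ∀ j : ℕ, Integrable (F j) (volume.restrict (Ioi 0)) := fun j =>
    (hbase j).const_mul _
  have hnorm : ∀ j : ℕ, (∫ t in Ioi (0:ℝ), ‖F j t‖)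
      = (|x| ^ j * Real.Gamma (j + g) / (j.factorial * Real.Gamma (a * j + b)) / Real.Gamma g) *
        ((1 / s) ^ (a * j + b) * Real.Gamma (a * j + b)) := by
    intro j
    have hptn : ∀ t ∈ Ioi (0:ℝ), ‖F j t‖
        = (|x| ^ j * Real.Gamma (j + g) / (j.factorial * Real.Gamma (a * j + b)) / Real.Gamma g) *
          (t ^ (a * j + b - 1) * Real.exp (-(s * t))) := by
      intro t ht
      have ht0 : (0:ℝ) < t := ht
      simp only [hF]; rw [Real.norm_eq_abs, abs_mul, abs_div, abs_div, abs_mul, abs_mul, abs_pow,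
        abs_of_pos (Real.Gamma_pos_of_pos (hjg j)), abs_of_pos (hGp j), abs_of_pos hGg,
        Nat.abs_cast, abs_mul, abs_of_pos (Real.rpow_pos_of_pos ht0 _),
        abs_of_pos (Real.exp_pos _)]
    rw [setIntegral_congr_fun measurableSet_Ioi hptn, integral_const_mul, hval j]
  -- the geometric-type ratio
  have hr1 : |x| * (1 / s) ^ a < 1 := by
    rw [one_div, ← Real.rpow_neg_one, ← Real.rpow_mul hs0.le, neg_one_mul, Real.rpow_neg hs0.le]
    rw [mul_inv_lt_iff₀ hsa, one_mul]
    exact hxs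
  have hr0 : 0 ≤ |x| * (1 / s) ^ a :=
    mul_nonneg (abs_nonneg x) (Real.rpow_nonneg (by positivity) _)
  have hpow : ∀ (u : ℝ) (j : ℕ), (1 / s : ℝ) ^ (a * j + b) = ((1/s) ^ a) ^ j * (1/s) ^ b := by
    intro u j
    rw [Real.rpow_add (by positivity), ← Real.rpow_natCast ((1/s) ^ a) j,
      ← Real.rpow_mul (by positivity)]
  have hsum : Summable fun j : ℕ => ∫ t in Ioi (0:ℝ), ‖F j t‖ := by
    have hbig : Summable fun j : ℕ =>
        ((1/s) ^ b / Real.Gamma g) * (Real.Gamma (j + g) / j.factorial * (|x| * (1/s) ^ a) ^ j) :=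
      (ml_summable g hg hr0 hr1).mul_left _
    refine hbig.congr fun j => ?_
    rw [hnorm j, hpow 0 j, mul_pow]
    field_simp
  have hswap := MeasureTheory.integral_tsum_of_summable_integral_norm hint hsum
  -- pointwise identity on Ioi 0
  have hpt : ∀ t ∈ Ioi (0:ℝ),
      Real.exp (-s * t) * (t ^ (b - 1) * mittagLeffler3 a b g (x * t ^ a))
        = ∑' j : ℕ, F j t := by
    intro t ht
    have ht0 : (0:ℝ) < t := ht
    rw [mittagLeffler3]
    rw [show Real.exp (-s * t) * (t ^ (b - 1) * ((1 / Real.Gamma g) *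
        ∑' j : ℕ, (x * t ^ a) ^ j * Real.Gamma (j + g) / (j.factorial * Real.Gamma (a * j + b))))
      = (Real.exp (-s * t) * t ^ (b - 1) * (1 / Real.Gamma g)) *
        ∑' j : ℕ, (x * t ^ a) ^ j * Real.Gamma (j + g) / (j.factorial * Real.Gamma (a * j + b))
      by ring, ← tsum_mul_left]
    refine tsum_congr fun j => ?_
    have h1 : (x * t ^ a) ^ j = x ^ j * t ^ (a * j) := by
      rw [mul_pow, ← Real.rpow_natCast (t ^ a) j, ← Real.rpow_mul ht0.le]
    have h2 : t ^ (a * j + b - 1) = t ^ (a * (j:ℝ)) * t ^ (b - 1) := by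
      rw [← Real.rpow_add ht0]; ring_nf
    simp only [hF]; rw [h1, h2, neg_mul]
    ring
  rw [setIntegral_congr_fun measurableSet_Ioi hpt, ← hswap]
  -- compute the sum of the integrals
  have hterm : ∀ j : ℕ, (∫ t in Ioi (0:ℝ), F j t)
      = ((1/s) ^ b / Real.Gamma g) *
        (Real.Gamma (j + g) / j.factorial * (x * (1/s) ^ a) ^ j) := by
    intro j
    simp only [hF]; rw [integral_const_mul, hval j, hpow 0 j, mul_pow]
    have h3 : (j.factorial : ℝ) ≠ 0 := Nat.cast_ne_zero.mpr j.factorial_ne_zero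
    field_simp
  have hy : |x * (1/s) ^ a| < 1 := by
    rw [abs_mul, abs_of_nonneg (Real.rpow_nonneg (by positivity) _)]
    exact hr1
  calc (∑' j : ℕ, ∫ t in Ioi (0:ℝ), F j t)
      = ((1/s) ^ b / Real.Gamma g) *
        ∑' j : ℕ, Real.Gamma (j + g) / j.factorial * (x * (1/s) ^ a) ^ j := by
        rw [← tsum_mul_left]; exact tsum_congr hterm
    _ = ((1/s) ^ b / Real.Gamma g) * (Real.Gamma g * (1 - x * (1/s) ^ a) ^ (-g)) := by
        rw [ml_binomial g hg hy]
    _ = s ^ (a * g - b) / (s ^ a - x) ^ g := by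
        have h5 : 0 < s ^ a - x := by linarith [(abs_lt.mp hxs).2]
        have h4 : 1 - x * (1/s) ^ a = (s ^ a - x) / s ^ a := by
          rw [one_div, Real.inv_rpow hs0.le]
          field_simp
        have e1 : ((1:ℝ)/s) ^ b = s ^ (-b) := by
          rw [one_div, Real.inv_rpow hs0.le, ← Real.rpow_neg hs0.le]
        have e2 : ((s ^ a - x) / s ^ a) ^ (-g) = s ^ (a * g) / (s ^ a - x) ^ g := by
          rw [Real.div_rpow h5.le hsa.le, Real.rpow_neg h5.le, Real.rpow_neg hsa.le,
            inv_div_inv, ← Real.rpow_mul hs0.le]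
        have h6 : (0:ℝ) < (s ^ a - x) ^ g := Real.rpow_pos_of_pos h5 g
        rw [h4, e2, e1, show a * g - b = a * g + (-b) by ring, Real.rpow_add hs0]
        field_simp
end

section
/- Fix θ ≥ 0. Then for any μ>0, ρ>0, γ>0, w∈ℝ and t>0, ∫_0^t e^{-θ y} y^{μ-1} E_{ρ,μ}^{γ}(w y^{ρ}) dy = e^{-θ t} ∑_{m=0}^{∞} θ^{m} t^{μ+m} E_{ρ,μ+m+1}^{γ}(w t^{ρ}). -/
open Real MeasureTheory Set

lemma Gamma_lb {ρ x : ℝ} (hρ : 0 < ρ) (hx : 1 < x) :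
    Real.Gamma x * (x - 1) ^ ρ ≤ Real.Gamma (x + ρ) := by
  have h0 : (0:ℝ) < x - 1 := by linarith
  have hxpos : (0:ℝ) < x := by linarith
  have hxρ : (0:ℝ) < x + ρ := by linarith
  have hs := Real.convexOn_log_Gamma.slope_mono_adjacent
    (show x - 1 ∈ Ioi (0:ℝ) from h0) (show x + ρ ∈ Ioi (0:ℝ) from hxρ)
    (show x - 1 < x by linarith) (show x < x + ρ by linarith)
  have hg : Real.Gamma x = (x - 1) * Real.Gamma (x - 1) := by
    have := Real.Gamma_add_one (s := x - 1) h0.ne'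
    simpa using this
  have hΓx : 0 < Real.Gamma x := Real.Gamma_pos_of_pos hxpos
  have hΓx1 : 0 < Real.Gamma (x - 1) := Real.Gamma_pos_of_pos h0
  have hΓxρ : 0 < Real.Gamma (x + ρ) := Real.Gamma_pos_of_pos hxρ
  simp only [Function.comp_apply] at hs
  have hlog : Real.log (Real.Gamma x) - Real.log (Real.Gamma (x - 1)) = Real.log (x - 1) := by
    rw [hg, Real.log_mul h0.ne' hΓx1.ne']; ring
  have hden1 : x - (x - 1) = (1:ℝ) := by ring
  have hden2 : x + ρ - x = ρ := by ring
  rw [hden1, hden2, div_one, hlog] at hs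
  -- hs : log (x-1) ≤ (log Γ(x+ρ) - log Γ x) / ρ
  have h2 : Real.log (x - 1) * ρ ≤ Real.log (Real.Gamma (x + ρ)) - Real.log (Real.Gamma x) := by
    have := mul_le_mul_of_nonneg_right hs hρ.le
    rwa [div_mul_cancel₀ _ hρ.ne'] at this

  have : Real.Gamma x * (x - 1) ^ ρ
      = Real.exp (Real.log (Real.Gamma x) + Real.log (x - 1) * ρ) := by
    rw [Real.exp_add, Real.exp_log hΓx, Real.rpow_def_of_pos h0]
  rw [this, ← Real.exp_log hΓxρ]
  exact Real.exp_le_exp.mpr (by linarith)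

lemma fact_Gamma {ν : ℝ} (hν : 0 < ν) (m : ℕ) :
    (m.factorial : ℝ) * Real.Gamma (ν + 1) ≤ Real.Gamma (ν + m + 1) := by
  induction m with
  | zero => simp
  | succ m ih =>
      have hpos : (0:ℝ) < ν + m + 1 := by positivity
      have hΓ : 0 < Real.Gamma (ν + m + 1) := Real.Gamma_pos_of_pos hpos
      push_cast [Nat.factorial_succ]
      rw [show ν + ((m:ℝ)+1) + 1 = (ν + (m:ℝ) + 1) + 1 from by ring,
        Real.Gamma_add_one hpos.ne']
      have h1 := mul_le_mul_of_nonneg_left ih (show (0:ℝ) ≤ (m:ℝ)+1 by positivity)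
      have h2 := mul_le_mul_of_nonneg_right (show (m:ℝ)+1 ≤ ν+(m:ℝ)+1 by linarith) hΓ.le
      nlinarith [h1, h2]

lemma summable_ML {ρ μ γ : ℝ} (hρ : 0 < ρ) (hμ : 0 < μ) (hγ : 0 < γ) (z : ℝ) :
    Summable (fun j : ℕ =>
      |z| ^ j * Real.Gamma (j + γ) / (j.factorial * Real.Gamma (ρ * j + μ))) := by
  set C := max 1 γ with hC
  have hC1 : (1:ℝ) ≤ C := le_max_left _ _
  have hCγ : γ ≤ C := le_max_right _ _
  have hT : Filter.Tendsto (fun j : ℕ => ρ * j + μ - 1) Filter.atTop Filter.atTop := by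
    have h := Filter.tendsto_atTop_add_const_right Filter.atTop (μ - 1)
      ((tendsto_natCast_atTop_atTop (R := ℝ)).const_mul_atTop hρ)
    simpa [add_sub_assoc] using h
  have hT2 : Filter.Tendsto (fun j : ℕ => (ρ * j + μ - 1) ^ ρ) Filter.atTop Filter.atTop :=
    (tendsto_rpow_atTop hρ).comp hT
  have hev1 : ∀ᶠ j : ℕ in Filter.atTop, 2 ≤ ρ * j + μ - 1 := hT.eventually_ge_atTop 2
  have hev2 : ∀ᶠ j : ℕ in Filter.atTop, 2 * |z| * C ≤ (ρ * j + μ - 1) ^ ρ :=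
    hT2.eventually_ge_atTop _
  refine summable_of_ratio_norm_eventually_le (r := 1/2) (by norm_num) ?_
  filter_upwards [hev1, hev2] with j h1 h2
  have hX1 : (1:ℝ) < ρ * j + μ := by linarith
  have hXpos : (0:ℝ) < ρ * j + μ := by linarith
  have hjγ : (0:ℝ) < (j:ℝ) + γ := by positivity
  have hΓjγ : 0 < Real.Gamma ((j:ℝ) + γ) := Real.Gamma_pos_of_pos hjγ
  have hΓX : 0 < Real.Gamma (ρ * j + μ) := Real.Gamma_pos_of_pos hXpos
  have hΓXρ : 0 < Real.Gamma (ρ * j + μ + ρ) := Real.Gamma_pos_of_pos (by linarith)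
  have hQ : (0:ℝ) < (j.factorial : ℝ) := by positivity
  have hglb := Gamma_lb hρ hX1
  have hcj : (j:ℝ) + γ ≤ C * ((j:ℝ) + 1) := by nlinarith [Nat.cast_nonneg (α := ℝ) j]
  have key : 2 * |z| * ((j:ℝ) + γ) * Real.Gamma (ρ * j + μ)
      ≤ ((j:ℝ) + 1) * Real.Gamma (ρ * j + μ + ρ) := by
    have hb1 : 2 * |z| * ((j:ℝ) + γ) * Real.Gamma (ρ * j + μ)
        ≤ ((j:ℝ)+1) * (2 * |z| * C * Real.Gamma (ρ * j + μ)) := by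
      nlinarith [mul_le_mul_of_nonneg_right
        (mul_le_mul_of_nonneg_left hcj (by positivity : (0:ℝ) ≤ 2 * |z|)) hΓX.le]
    have hb2 : ((j:ℝ)+1) * (2 * |z| * C * Real.Gamma (ρ * j + μ))
        ≤ ((j:ℝ)+1) * ((ρ * j + μ - 1) ^ ρ * Real.Gamma (ρ * j + μ)) := by
      have := mul_le_mul_of_nonneg_right h2 hΓX.le
      exact mul_le_mul_of_nonneg_left this (by positivity)
    have hb3 : ((j:ℝ)+1) * ((ρ * j + μ - 1) ^ ρ * Real.Gamma (ρ * j + μ))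
        ≤ ((j:ℝ)+1) * Real.Gamma (ρ * j + μ + ρ) := by
      have : Real.Gamma (ρ * j + μ) * (ρ * j + μ - 1) ^ ρ ≤ Real.Gamma (ρ * j + μ + ρ) := hglb
      nlinarith [Nat.cast_nonneg (α := ℝ) j]
    linarith
  have hnn2 : (0:ℝ) ≤ |z| ^ j * Real.Gamma ((j:ℝ) + γ)
      / ((j.factorial : ℝ) * Real.Gamma (ρ * j + μ)) := by positivity
  have e1 : |z| ^ (j+1) * Real.Gamma ((j+1 : ℕ) + γ)
        / (((j+1 : ℕ).factorial : ℝ) * Real.Gamma (ρ * (j+1 : ℕ) + μ))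
      = (|z| * ((j:ℝ) + γ) * (|z| ^ j * Real.Gamma ((j:ℝ) + γ)))
        / ((((j:ℝ) + 1) * (j.factorial : ℝ)) * Real.Gamma (ρ * j + μ + ρ)) := by
    push_cast [Nat.factorial_succ]
    rw [show (j:ℝ) + 1 + γ = ((j:ℝ) + γ) + 1 from by ring,
      Real.Gamma_add_one hjγ.ne',
      show ρ * ((j:ℝ) + 1) + μ = ρ * j + μ + ρ from by ring]
    ring
  rw [e1, Real.norm_of_nonneg (by positivity), Real.norm_of_nonneg hnn2]
  rw [show (1:ℝ)/2 * (|z| ^ j * Real.Gamma ((j:ℝ) + γ)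
      / ((j.factorial : ℝ) * Real.Gamma (ρ * j + μ)))
    = (|z| ^ j * Real.Gamma ((j:ℝ) + γ))
      / (2 * ((j.factorial : ℝ) * Real.Gamma (ρ * j + μ))) from by ring]
  rw [div_le_div_iff₀ (by positivity) (by positivity)]
  have hPQ : (0:ℝ) ≤ (|z| ^ j * Real.Gamma ((j:ℝ) + γ)) * (j.factorial : ℝ) := by positivity
  nlinarith [mul_le_mul_of_nonneg_right key hPQ]

lemma beta_eval {ν t : ℝ} (hν : 0 < ν) (ht : 0 < t) (m : ℕ) :
    ∫ y in (0:ℝ)..t, y ^ (ν - 1) * (t - y) ^ m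
      = Real.Gamma ν * m.factorial / Real.Gamma (ν + m + 1) * t ^ (ν + m) := by
  have hνc : 0 < (ν : ℂ).re := by simpa using hν
  have hmc : 0 < ((m : ℂ) + 1).re := by
    simp only [Complex.add_re, Complex.natCast_re, Complex.one_re]
    positivity
  have hsc := Complex.betaIntegral_scaled (ν : ℂ) ((m : ℂ) + 1) ht
  have hΓβ := Complex.Gamma_mul_Gamma_eq_betaIntegral hνc hmc
  have hre : (∫ x in (0:ℝ)..t, (x : ℂ) ^ ((ν : ℂ) - 1) * ((t : ℂ) - x) ^ ((m : ℂ) + 1 - 1))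
      = ((∫ y in (0:ℝ)..t, y ^ (ν - 1) * (t - y) ^ m : ℝ) : ℂ) := by
    rw [← intervalIntegral.integral_ofReal]
    apply intervalIntegral.integral_congr
    intro x hx
    rw [uIcc_of_le ht.le] at hx
    have hx0 : 0 ≤ x := hx.1
    simp only [Complex.ofReal_mul, Complex.ofReal_pow, Complex.ofReal_sub]
    rw [show ((ν : ℂ) - 1) = ((ν - 1 : ℝ) : ℂ) from by push_cast; ring,
      ← Complex.ofReal_cpow hx0,
      show ((m : ℂ) + 1 - 1) = ((m : ℕ) : ℂ) from by ring, Complex.cpow_natCast]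
  rw [hre] at hsc
  have hΓpos : 0 < Real.Gamma (ν + m + 1) := Real.Gamma_pos_of_pos (by positivity)
  have h2 : ((Real.Gamma (ν + m + 1) : ℝ) : ℂ) ≠ 0 := by exact_mod_cast hΓpos.ne'
  have hg1 : Complex.Gamma ((ν : ℂ) + ((m : ℂ) + 1)) = (Real.Gamma (ν + m + 1) : ℂ) := by
    rw [show ((ν : ℂ) + ((m : ℂ) + 1)) = ((ν + m + 1 : ℝ) : ℂ) from by push_cast; ring,
      Complex.Gamma_ofReal]
  have hkey : ((Real.Gamma (ν + m + 1) : ℝ) : ℂ) * Complex.betaIntegral (ν : ℂ) ((m : ℂ) + 1)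
      = ((Real.Gamma ν : ℝ) : ℂ) * ((m.factorial : ℝ) : ℂ) := by
    rw [← hg1, ← hΓβ, Complex.Gamma_ofReal, Complex.Gamma_nat_eq_factorial]
    push_cast; ring
  have hβ : Complex.betaIntegral (ν : ℂ) ((m : ℂ) + 1)
      = ((Real.Gamma ν * m.factorial / Real.Gamma (ν + m + 1) : ℝ) : ℂ) := by
    rw [eq_comm, Complex.ofReal_div, Complex.ofReal_mul, div_eq_iff h2, eq_comm, mul_comm] at *
    push_cast at hkey ⊢
    linear_combination hkey
  rw [hβ] at hsc
  have htc : ((t : ℂ)) ^ ((ν : ℂ) + ((m : ℂ) + 1) - 1) = ((t ^ (ν + m) : ℝ) : ℂ) := by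
    rw [show ((ν : ℂ) + ((m : ℂ) + 1) - 1) = ((ν + m : ℝ) : ℂ) from by push_cast; ring,
      ← Complex.ofReal_cpow ht.le]
  rw [htc, ← Complex.ofReal_mul] at hsc
  exact_mod_cast hsc.trans (Complex.ofReal_inj.mpr (by ring))

lemma exp_integral {θ ν t : ℝ} (hθ : 0 ≤ θ) (hν : 0 < ν) (ht : 0 < t) :
    ∫ y in (0:ℝ)..t, Real.exp (-θ * y) * y ^ (ν - 1)
      = Real.exp (-θ * t) * ∑' m : ℕ, θ ^ m * t ^ (ν + m)
          * (Real.Gamma ν / Real.Gamma (ν + m + 1)) := by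
  have hΓν : 0 < Real.Gamma ν := Real.Gamma_pos_of_pos hν
  set F : ℕ → ℝ → ℝ := fun m y => θ ^ m / m.factorial * (y ^ (ν - 1) * (t - y) ^ m) with hF
  have hpt : ∀ y : ℝ, Real.exp (-θ * y) * y ^ (ν - 1)
      = Real.exp (-θ * t) * ∑' m, F m y := by
    intro y
    have hexp : Real.exp (θ * (t - y)) = ∑' m : ℕ, (θ * (t - y)) ^ m / m.factorial := by
      rw [Real.exp_eq_exp_ℝ, NormedSpace.exp_eq_tsum_div]
    have h1 : ∑' m, F m y = y ^ (ν - 1) * Real.exp (θ * (t - y)) := by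
      rw [hexp, ← tsum_mul_left]
      apply tsum_congr; intro m
      simp only [hF, mul_pow]
      ring
    rw [h1, show Real.exp (-θ * t) * (y ^ (ν - 1) * Real.exp (θ * (t - y)))
        = y ^ (ν - 1) * (Real.exp (-θ * t) * Real.exp (θ * (t - y))) from by ring,
      ← Real.exp_add, show -θ * t + θ * (t - y) = -θ * y from by ring]
    ring
  have hint : ∀ m, IntervalIntegrable (F m) volume 0 t := by
    intro m
    apply IntervalIntegrable.const_mul
    exact (intervalIntegral.intervalIntegrable_rpow' (by linarith)).mul_continuousOn
      (((continuous_const.sub continuous_id).pow m)).continuousOn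
  have hval : ∀ m, ∫ y in (0:ℝ)..t, F m y
      = θ ^ m * t ^ (ν + m) * (Real.Gamma ν / Real.Gamma (ν + m + 1)) := by
    intro m
    have hfac : (m.factorial : ℝ) ≠ 0 := by positivity
    have hΓ : Real.Gamma (ν + m + 1) ≠ 0 := (Real.Gamma_pos_of_pos (by positivity)).ne'
    simp only [hF]
    rw [intervalIntegral.integral_const_mul, beta_eval hν ht m]
    field_simp
  have hInt : ∀ m, IntegrableOn (F m) (Ioc (0:ℝ) t) :=
    fun m => (intervalIntegrable_iff_integrableOn_Ioc_of_le ht.le).mp (hint m)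
  have hnorm : ∀ m, (∫ y in Ioc (0:ℝ) t, ‖F m y‖)
      = θ ^ m * t ^ (ν + m) * (Real.Gamma ν / Real.Gamma (ν + m + 1)) := by
    intro m
    rw [← hval m, intervalIntegral.integral_of_le ht.le]
    apply setIntegral_congr_fun measurableSet_Ioc
    intro y hy
    have h1 : (0:ℝ) ≤ y ^ (ν - 1) := Real.rpow_nonneg hy.1.le _
    have h2 : (0:ℝ) ≤ (t - y) ^ m := pow_nonneg (by linarith [hy.2]) m
    have h3 : (0:ℝ) ≤ θ ^ m / m.factorial := by positivity
    exact Real.norm_of_nonneg (by positivity)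
  have hbound : ∀ m : ℕ, θ ^ m * t ^ (ν + m) * (Real.Gamma ν / Real.Gamma (ν + m + 1))
      ≤ (θ * t) ^ m / m.factorial * (t ^ ν * Real.Gamma ν / Real.Gamma (ν + 1)) := by
    intro m
    have hfg := fact_Gamma hν m
    have hΓ1 : 0 < Real.Gamma (ν + 1) := Real.Gamma_pos_of_pos (by positivity)
    have hfac : (0:ℝ) < (m.factorial : ℝ) := by positivity
    have h1 : Real.Gamma ν / Real.Gamma (ν + m + 1)
        ≤ Real.Gamma ν / ((m.factorial : ℝ) * Real.Gamma (ν + 1)) :=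
      div_le_div_of_nonneg_left hΓν.le (by positivity) hfg
    calc θ ^ m * t ^ (ν + m) * (Real.Gamma ν / Real.Gamma (ν + m + 1))
        ≤ θ ^ m * t ^ (ν + m) * (Real.Gamma ν / ((m.factorial : ℝ) * Real.Gamma (ν + 1))) := by
          apply mul_le_mul_of_nonneg_left h1 (by positivity)
      _ = (θ * t) ^ m / m.factorial * (t ^ ν * Real.Gamma ν / Real.Gamma (ν + 1)) := by
          rw [Real.rpow_add ht, Real.rpow_natCast, mul_pow]
          field_simp
  have hsum : Summable (fun m => ∫ y in Ioc (0:ℝ) t, ‖F m y‖) := by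
    rw [summable_congr hnorm]
    apply Summable.of_nonneg_of_le ?_ hbound
      ((Real.summable_pow_div_factorial (θ * t)).mul_right _)
    intro m
    have : (0:ℝ) ≤ t ^ (ν + (m:ℝ)) := Real.rpow_nonneg ht.le _
    positivity
  have key := MeasureTheory.integral_tsum_of_summable_integral_norm
    (μ := volume.restrict (Ioc (0:ℝ) t)) hInt hsum
  calc ∫ y in (0:ℝ)..t, Real.exp (-θ * y) * y ^ (ν - 1)
      = ∫ y in (0:ℝ)..t, Real.exp (-θ * t) * ∑' m, F m y :=
        intervalIntegral.integral_congr (fun y _ => hpt y)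
    _ = Real.exp (-θ * t) * ∫ y in (0:ℝ)..t, ∑' m, F m y := by
        rw [intervalIntegral.integral_const_mul]
    _ = Real.exp (-θ * t) * ∑' m, ∫ y in (0:ℝ)..t, F m y := by
        rw [intervalIntegral.integral_of_le ht.le, ← key]
        simp_rw [intervalIntegral.integral_of_le ht.le]
    _ = Real.exp (-θ * t) * ∑' m : ℕ, θ ^ m * t ^ (ν + m)
          * (Real.Gamma ν / Real.Gamma (ν + m + 1)) := by
        rw [tsum_congr hval]

set_option maxHeartbeats 1000000 in
theorem integral_exp_mul_mittagLeffler3 (θ : ℝ) (hθ : 0 ≤ θ) (μ ρ γ : ℝ)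
    (hμ : 0 < μ) (hρ : 0 < ρ) (hγ : 0 < γ) (w : ℝ) (t : ℝ) (ht : 0 < t) :
    ∫ y in (0:ℝ)..t, Real.exp (-θ * y) * y ^ (μ - 1) * mittagLeffler3 ρ μ γ (w * y ^ ρ) =
      Real.exp (-θ * t) * ∑' m : ℕ, θ ^ m * t ^ (μ + m) * mittagLeffler3 ρ (μ + m + 1) γ (w * t ^ ρ) := by
  have hΓγ : 0 < Real.Gamma γ := Real.Gamma_pos_of_pos hγ
  have htρ : 0 < t ^ ρ := Real.rpow_pos_of_pos ht ρ
  have htpow : ∀ (j : ℕ) (c : ℝ), t ^ (ρ * j + c) = (t ^ ρ) ^ j * t ^ c := by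
    intro j c
    rw [Real.rpow_add ht, Real.rpow_mul ht.le, Real.rpow_natCast]
  set G : ℕ → ℝ → ℝ := fun j y => Real.exp (-θ * y) * y ^ (μ - 1) * (1 / Real.Gamma γ)
      * ((w * y ^ ρ) ^ j * Real.Gamma (j + γ) / (j.factorial * Real.Gamma (ρ * j + μ))) with hG
  set f : ℕ → ℕ → ℝ := fun j m => w ^ j * Real.Gamma (j + γ) / (Real.Gamma γ * j.factorial)
      * (θ ^ m * t ^ (ρ * j + (μ + m)) / Real.Gamma (ρ * j + μ + m + 1)) with hf
  -- pointwise expansion of the integrand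
  have hpt : ∀ y : ℝ, Real.exp (-θ * y) * y ^ (μ - 1) * mittagLeffler3 ρ μ γ (w * y ^ ρ)
      = ∑' j, G j y := by
    intro y
    have h0 : Real.exp (-θ * y) * y ^ (μ - 1) * mittagLeffler3 ρ μ γ (w * y ^ ρ)
        = (Real.exp (-θ * y) * y ^ (μ - 1) * (1 / Real.Gamma γ))
          * ∑' j : ℕ, (w * y ^ ρ) ^ j * Real.Gamma (j + γ)
            / (j.factorial * Real.Gamma (ρ * j + μ)) := by
      rw [mittagLeffler3]; ring
    rw [h0, ← tsum_mul_left]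
  -- pointwise form of G j on Ioc
  have hGeq : ∀ j : ℕ, EqOn (G j) (fun y =>
      (w ^ j * Real.Gamma (j + γ) / (Real.Gamma γ * j.factorial * Real.Gamma (ρ * j + μ)))
        * (Real.exp (-θ * y) * y ^ (ρ * j + μ - 1))) (Ioc (0:ℝ) t) := by
    intro j y hy
    have hy0 : (0:ℝ) < y := hy.1
    have h1 : (w * y ^ ρ) ^ j = w ^ j * y ^ (ρ * j) := by
      rw [mul_pow, ← Real.rpow_natCast (y ^ ρ) j, ← Real.rpow_mul hy0.le]
    have h2 : y ^ (ρ * j + μ - 1) = y ^ (μ - 1) * y ^ (ρ * j) := by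
      rw [← Real.rpow_add hy0]; ring_nf
    simp only [hG, h1, h2]
    ring
  -- interval integrability of G j
  have hint : ∀ j, IntervalIntegrable (G j) volume 0 t := by
    intro j
    have hGre : G j = fun y => y ^ (μ - 1) * (Real.exp (-θ * y) * (1 / Real.Gamma γ)
        * ((w * y ^ ρ) ^ j * Real.Gamma (j + γ) / (j.factorial * Real.Gamma (ρ * j + μ)))) := by
      funext y; simp only [hG]; ring
    rw [hGre]
    apply (intervalIntegral.intervalIntegrable_rpow' (by linarith)).mul_continuousOn
    apply Continuous.continuousOn
    have hc1 : Continuous fun y : ℝ => Real.exp (-θ * y) :=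
      Real.continuous_exp.comp (continuous_const.mul continuous_id)
    have hc2 : Continuous fun y : ℝ => (w * y ^ ρ) ^ j :=
      ((continuous_const.mul (Real.continuous_rpow_const hρ.le)).pow j)
    continuity
  have hIntOn : ∀ j, IntegrableOn (G j) (Ioc (0:ℝ) t) :=
    fun j => (intervalIntegrable_iff_integrableOn_Ioc_of_le ht.le).mp (hint j)
  -- value of each integral
  have hval : ∀ j, ∫ y in Ioc (0:ℝ) t, G j y = Real.exp (-θ * t) * ∑' m, f j m := by
    intro j
    have hν : (0:ℝ) < ρ * j + μ := by positivity
    have hΓν : 0 < Real.Gamma (ρ * j + μ) := Real.Gamma_pos_of_pos hν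
    rw [setIntegral_congr_fun measurableSet_Ioc (hGeq j), integral_const_mul,
      ← intervalIntegral.integral_of_le ht.le, exp_integral hθ hν ht]
    rw [show ∀ a b c : ℝ, a * (b * c) = b * (a * c) from fun a b c => by ring, ← tsum_mul_left]
    congr 1
    apply tsum_congr; intro m
    simp only [hf]
    have hΓ2 : Real.Gamma (ρ * j + μ + m + 1) ≠ 0 :=
      (Real.Gamma_pos_of_pos (by positivity)).ne'
    have hh : ρ * (j:ℝ) + (μ + (m:ℝ)) = ρ * j + μ + m := by ring
    rw [hh]
    field_simp
  -- norm bound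
  set b : ℕ → ℝ := fun j => t ^ μ / Real.Gamma γ
      * (|w * t ^ ρ| ^ j * Real.Gamma (j + γ) / (j.factorial * Real.Gamma (ρ * j + (μ + 1)))) with hb
  have hnormle : ∀ j, (∫ y in Ioc (0:ℝ) t, ‖G j y‖) ≤ b j := by
    intro j
    have hν : (0:ℝ) < ρ * j + μ := by positivity
    have hΓν : 0 < Real.Gamma (ρ * j + μ) := Real.Gamma_pos_of_pos hν
    have hΓjγ : 0 < Real.Gamma ((j:ℝ) + γ) := Real.Gamma_pos_of_pos (by positivity)
    have hfac : (0:ℝ) < (j.factorial : ℝ) := by positivity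
    have hir : IntervalIntegrable (fun y : ℝ => y ^ (ρ * j + μ - 1)) volume 0 t :=
      intervalIntegral.intervalIntegrable_rpow' (by linarith)
    have hireOn : IntegrableOn (fun y : ℝ => y ^ (ρ * j + μ - 1)) (Ioc (0:ℝ) t) :=
      (intervalIntegrable_iff_integrableOn_Ioc_of_le ht.le).mp hir
    have hieOn : IntegrableOn (fun y : ℝ => Real.exp (-θ * y) * y ^ (ρ * j + μ - 1))
        (Ioc (0:ℝ) t) := by
      apply (intervalIntegrable_iff_integrableOn_Ioc_of_le ht.le).mp
      exact hir.continuousOn_mul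
        (Real.continuous_exp.comp (continuous_const.mul continuous_id)).continuousOn
    have step1 : (∫ y in Ioc (0:ℝ) t, ‖G j y‖)
        = |w ^ j * Real.Gamma (j + γ) / (Real.Gamma γ * j.factorial * Real.Gamma (ρ * j + μ))|
          * ∫ y in Ioc (0:ℝ) t, Real.exp (-θ * y) * y ^ (ρ * j + μ - 1) := by
      rw [← integral_const_mul]
      apply setIntegral_congr_fun measurableSet_Ioc
      intro y hy
      show ‖G j y‖ = _
      rw [hGeq j hy, norm_mul, Real.norm_eq_abs, Real.norm_of_nonneg
        (mul_nonneg (Real.exp_nonneg _) (Real.rpow_nonneg hy.1.le _))]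
    have step2 : (∫ y in Ioc (0:ℝ) t, Real.exp (-θ * y) * y ^ (ρ * j + μ - 1))
        ≤ ∫ y in Ioc (0:ℝ) t, y ^ (ρ * j + μ - 1) := by
      apply setIntegral_mono_on hieOn hireOn measurableSet_Ioc
      intro y hy
      have h1 : Real.exp (-θ * y) ≤ 1 := Real.exp_le_one_iff.mpr (by nlinarith [hy.1])
      nlinarith [Real.rpow_nonneg hy.1.le (ρ * j + μ - 1), Real.exp_nonneg (-θ * y)]
    have step3 : (∫ y in Ioc (0:ℝ) t, y ^ (ρ * j + μ - 1)) = t ^ (ρ * j + μ) / (ρ * j + μ) := by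
      rw [← intervalIntegral.integral_of_le ht.le,
        integral_rpow (Or.inl (by linarith : (-1:ℝ) < ρ * j + μ - 1)),
        show ρ * (j:ℝ) + μ - 1 + 1 = ρ * j + μ from by ring,
        Real.zero_rpow hν.ne', sub_zero]
    have habs : |w ^ j * Real.Gamma (j + γ)
          / (Real.Gamma γ * j.factorial * Real.Gamma (ρ * j + μ))|
        = |w| ^ j * Real.Gamma (j + γ)
          / (Real.Gamma γ * j.factorial * Real.Gamma (ρ * j + μ)) := by
      rw [abs_div, abs_mul, abs_pow, abs_of_pos hΓjγ,
        abs_of_pos (by positivity : (0:ℝ) < Real.Gamma γ * j.factorial * Real.Gamma (ρ * j + μ))]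
    have hbj : |w| ^ j * Real.Gamma (j + γ)
          / (Real.Gamma γ * j.factorial * Real.Gamma (ρ * j + μ))
          * (t ^ (ρ * j + μ) / (ρ * j + μ)) = b j := by
      simp only [hb]
      rw [show ρ * (j:ℝ) + (μ + 1) = (ρ * j + μ) + 1 from by ring,
        Real.Gamma_add_one hν.ne', htpow j μ,
        abs_mul, abs_of_pos htρ, mul_pow]
      field_simp
    calc (∫ y in Ioc (0:ℝ) t, ‖G j y‖)
        ≤ |w ^ j * Real.Gamma (j + γ)
            / (Real.Gamma γ * j.factorial * Real.Gamma (ρ * j + μ))|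
          * ∫ y in Ioc (0:ℝ) t, y ^ (ρ * j + μ - 1) := by
          rw [step1]; exact mul_le_mul_of_nonneg_left step2 (abs_nonneg _)
      _ = b j := by rw [step3, habs, hbj]
  have hsummb : Summable b :=
    (summable_ML hρ (by linarith : (0:ℝ) < μ + 1) hγ (w * t ^ ρ)).mul_left _
  have hsum : Summable (fun j => ∫ y in Ioc (0:ℝ) t, ‖G j y‖) :=
    Summable.of_nonneg_of_le (fun j => integral_nonneg fun y => norm_nonneg _) hnormle hsummb
  have key := MeasureTheory.integral_tsum_of_summable_integral_norm hIntOn hsum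
  -- double sum summability
  set u : ℕ → ℝ := fun j => |w * t ^ ρ| ^ j * Real.Gamma (j + γ)
      / (j.factorial * Real.Gamma (ρ * j + (μ + 1))) / Real.Gamma γ with hu
  set v : ℕ → ℝ := fun m => t ^ μ * ((θ * t) ^ m / m.factorial) with hv
  have hsu : Summable u :=
    (summable_ML hρ (by linarith : (0:ℝ) < μ + 1) hγ (w * t ^ ρ)).div_const _
  have hsv : Summable v := (Real.summable_pow_div_factorial (θ * t)).mul_left _
  have hun : ∀ j, 0 ≤ u j := by
    intro j
    have h1 : 0 < Real.Gamma ((j:ℝ) + γ) := Real.Gamma_pos_of_pos (by positivity)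
    have h2 : 0 < Real.Gamma (ρ * j + (μ + 1)) := Real.Gamma_pos_of_pos (by positivity)
    have h3 : (0:ℝ) < (j.factorial : ℝ) := by positivity
    have h4 : (0:ℝ) ≤ |w * t ^ ρ| ^ j := pow_nonneg (abs_nonneg _) j
    positivity
  have hvn : ∀ m, 0 ≤ v m := by
    intro m
    have : (0:ℝ) ≤ (θ * t) ^ m := pow_nonneg (by positivity) m
    positivity
  have huv : Summable (fun p : ℕ × ℕ => u p.1 * v p.2) :=
    hsu.mul_of_nonneg hsv hun hvn
  have hfabs : ∀ p : ℕ × ℕ, ‖f p.1 p.2‖ ≤ u p.1 * v p.2 := by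
    rintro ⟨j, m⟩
    have hν : (0:ℝ) < ρ * j + μ := by positivity
    have hΓν1 : 0 < Real.Gamma (ρ * j + μ + 1) := Real.Gamma_pos_of_pos (by positivity)
    have hΓνm : 0 < Real.Gamma (ρ * j + μ + m + 1) := Real.Gamma_pos_of_pos (by positivity)
    have hΓjγ : 0 < Real.Gamma ((j:ℝ) + γ) := Real.Gamma_pos_of_pos (by positivity)
    have hfj : (0:ℝ) < (j.factorial : ℝ) := by positivity
    have hfm : (0:ℝ) < (m.factorial : ℝ) := by positivity
    have habs : ‖f j m‖ = |w| ^ j * Real.Gamma (j + γ) / (Real.Gamma γ * j.factorial)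
        * (θ ^ m * t ^ (ρ * j + (μ + m)) / Real.Gamma (ρ * j + μ + m + 1)) := by
      simp only [hf]
      rw [Real.norm_eq_abs, abs_mul, abs_div, abs_mul, abs_pow, abs_of_pos hΓjγ,
        abs_of_pos (by positivity : (0:ℝ) < Real.Gamma γ * j.factorial),
        abs_div, abs_mul, abs_of_pos hΓνm,
        abs_of_nonneg (pow_nonneg hθ m),
        abs_of_pos (Real.rpow_pos_of_pos ht _)]
    rw [habs]
    have hfg := fact_Gamma (by positivity : (0:ℝ) < ρ * j + μ) m
    have hdm : Real.Gamma (ρ * j + μ + 1) * (m.factorial : ℝ) ≤ Real.Gamma (ρ * j + μ + m + 1) := by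
      rw [mul_comm]; exact hfg
    have h1 : θ ^ m * t ^ (ρ * j + (μ + m)) / Real.Gamma (ρ * j + μ + m + 1)
        ≤ θ ^ m * t ^ (ρ * j + (μ + m)) / (Real.Gamma (ρ * j + μ + 1) * (m.factorial : ℝ)) := by
      apply div_le_div_of_nonneg_left _ (by positivity) hdm
      have : (0:ℝ) ≤ t ^ (ρ * j + (μ + m)) := (Real.rpow_pos_of_pos ht _).le
      positivity
    have hfirst : (0:ℝ) ≤ |w| ^ j * Real.Gamma (j + γ) / (Real.Gamma γ * j.factorial) := by
      have : (0:ℝ) ≤ |w| ^ j := pow_nonneg (abs_nonneg _) j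
      positivity
    calc |w| ^ j * Real.Gamma (j + γ) / (Real.Gamma γ * j.factorial)
          * (θ ^ m * t ^ (ρ * j + (μ + m)) / Real.Gamma (ρ * j + μ + m + 1))
        ≤ |w| ^ j * Real.Gamma (j + γ) / (Real.Gamma γ * j.factorial)
          * (θ ^ m * t ^ (ρ * j + (μ + m)) / (Real.Gamma (ρ * j + μ + 1) * (m.factorial : ℝ))) :=
          mul_le_mul_of_nonneg_left h1 hfirst
      _ = u j * v m := by
          simp only [hu, hv]
          rw [htpow j (μ + m), Real.rpow_add ht, Real.rpow_natCast,
            abs_mul, abs_of_pos htρ, mul_pow,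
            show ρ * (j:ℝ) + (μ + 1) = ρ * j + μ + 1 from by ring, mul_pow]
          ring
  have hfsum : Summable (Function.uncurry f) := by
    apply Summable.of_norm
    exact Summable.of_nonneg_of_le (fun p => norm_nonneg _) hfabs huv
  -- inner sum identification
  have hinner : ∀ m : ℕ, (∑' j, f j m)
      = θ ^ m * t ^ (μ + m) * mittagLeffler3 ρ (μ + m + 1) γ (w * t ^ ρ) := by
    intro m
    rw [mittagLeffler3, show θ ^ m * t ^ (μ + (m:ℝ)) * ((1 / Real.Gamma γ)
        * ∑' j : ℕ, (w * t ^ ρ) ^ j * Real.Gamma (j + γ)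
          / (j.factorial * Real.Gamma (ρ * j + (μ + m + 1))))
      = (θ ^ m * t ^ (μ + (m:ℝ)) * (1 / Real.Gamma γ))
        * ∑' j : ℕ, (w * t ^ ρ) ^ j * Real.Gamma (j + γ)
          / (j.factorial * Real.Gamma (ρ * j + (μ + m + 1))) from by ring, ← tsum_mul_left]
    apply tsum_congr; intro j
    have hΓνm : Real.Gamma (ρ * j + μ + m + 1) ≠ 0 :=
      (Real.Gamma_pos_of_pos (by positivity)).ne'
    simp only [hf]
    rw [mul_pow, htpow j (μ + m), show ρ * (j:ℝ) + (μ + (m:ℝ) + 1) = ρ * j + μ + m + 1 from by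
        ring]
    ring
  -- final assembly
  calc ∫ y in (0:ℝ)..t, Real.exp (-θ * y) * y ^ (μ - 1) * mittagLeffler3 ρ μ γ (w * y ^ ρ)
      = ∫ y in (0:ℝ)..t, ∑' j, G j y := intervalIntegral.integral_congr (fun y _ => hpt y)
    _ = ∑' j, ∫ y in Ioc (0:ℝ) t, G j y := by
        rw [intervalIntegral.integral_of_le ht.le, ← key]
    _ = ∑' j, Real.exp (-θ * t) * ∑' m, f j m := tsum_congr hval
    _ = Real.exp (-θ * t) * ∑' j, ∑' m, f j m := tsum_mul_left
    _ = Real.exp (-θ * t) * ∑' m, ∑' j, f j m := by rw [Summable.tsum_comm hfsum]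
    _ = Real.exp (-θ * t) * ∑' m : ℕ, θ ^ m * t ^ (μ + m)
          * mittagLeffler3 ρ (μ + m + 1) γ (w * t ^ ρ) := by rw [tsum_congr hinner]
end
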